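/- For all indices 1 ≤ i < j < k ≤ n, in the presented group G the element y_{ik} commutes with p_{jk} p_{ij} p_{jk}^{-1} t_k^{-1} y_{jk} t_k: y_{ik}(p_{jk} p_{ij} p_{jk}^{-1} t_k^{-1} y_{jk} t_k) =_R (p_{jk} p_{ij} p_{jk}^{-1} t_k^{-1} y_{jk} t_k) y_{ik}. -/

import Mathlib

namespace PureHilden

/-- The three symbols `p`, `x`, `y`. -/
inductive Sym : Type
  | p | x | y
  deriving DecidableEq

open Sym

/-- Generators of the free group `F`:  `p_{ij}, x_{ij}, y_{ij}` for `1 ≤ i < j ≤ n`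
and `t_k` for `1 ≤ k ≤ n`. -/
inductive Gen (n : ℕ) : Type
  | pair (s : Sym) (i j : ℕ) (h : 1 ≤ i ∧ i < j ∧ j ≤ n) : Gen n
  | t (k : ℕ) (h : 1 ≤ k ∧ k ≤ n) : Gen n

/-- The free group `F` on the set `S`. -/
abbrev FG (n : ℕ) := FreeGroup (Gen n)

/-- `α_{ij}` (symmetrised: `α_{ji} = α_{ij}`); junk value `1` for invalid indices. -/
def gsym (n : ℕ) (s : Sym) (i j : ℕ) : FG n :=
  if h : 1 ≤ min i j ∧ min i j < max i j ∧ max i j ≤ n then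
    FreeGroup.of (Gen.pair s (min i j) (max i j) h)
  else 1

def P (n i j : ℕ) : FG n := gsym n Sym.p i j
def X (n i j : ℕ) : FG n := gsym n Sym.x i j
def Y (n i j : ℕ) : FG n := gsym n Sym.y i j

def T (n k : ℕ) : FG n :=
  if h : 1 ≤ k ∧ k ≤ n then FreeGroup.of (Gen.t k h) else 1

/-- `1 ≤ k ≤ n`. -/
def Idx (n k : ℕ) : Prop := 1 ≤ k ∧ k ≤ n

/-- `1 ≤ i < j ≤ n`. -/
def Idx2 (n i j : ℕ) : Prop := 1 ≤ i ∧ i < j ∧ j ≤ n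

/-- `(i,j,k)` is a cyclic rotation of a strictly increasing triple. -/
def cyc3 (i j k : ℕ) : Prop := (i < j ∧ j < k) ∨ (j < k ∧ k < i) ∨ (k < i ∧ i < j)

/-- `(i,j,k,l)` is a cyclic rotation of a strictly increasing quadruple. -/
def cyc4 (i j k l : ℕ) : Prop :=
  (i < j ∧ j < k ∧ k < l) ∨ (j < k ∧ k < l ∧ l < i) ∨
  (k < l ∧ l < i ∧ i < j) ∨ (l < i ∧ i < j ∧ j < k)

def c2A : List (Sym × Sym × Sym) :=
  [(p,p,p),(p,y,y),(x,p,p),(x,x,p),(x,y,y),(y,p,p),(y,p,x),(y,y,y)]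
def c2B : List (Sym × Sym × Sym) :=
  [(p,p,p),(p,x,y),(x,p,p),(x,p,x),(x,x,y),(y,p,p),(y,x,y),(y,y,p)]
def c2C : List (Sym × Sym × Sym) :=
  [(p,p,p),(p,x,x),(x,p,p),(x,x,x),(x,y,p),(y,p,p),(y,p,y),(y,x,x)]

/-- The allowed triples `(α,β,γ)` for relation (C2), by cyclic ordering of `(i,j,k)`. -/
def C2ok (i j k : ℕ) (a b c : Sym) : Prop :=
  (i < j ∧ j < k ∧ (a,b,c) ∈ c2A) ∨
  (j < k ∧ k < i ∧ (a,b,c) ∈ c2B) ∨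
  (k < i ∧ i < j ∧ (a,b,c) ∈ c2C)

/-- The relations `R`, encoded as the words `u * v⁻¹` for each relation `u = v`. -/
inductive Rel (n : ℕ) : FG n → Prop
  | cpt {i j k : ℕ} (hij : Idx2 n i j) (hk : Idx n k) :
      Rel n (P n i j * T n k * (T n k * P n i j)⁻¹)
  | ctt {i j : ℕ} (hi : Idx n i) (hj : Idx n j) :
      Rel n (T n i * T n j * (T n j * T n i)⁻¹)
  | cxt {i j k : ℕ} (hij : Idx2 n i j) (hk : Idx n k) (hne : k ≠ i) :
      Rel n (X n i j * T n k * (T n k * X n i j)⁻¹)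
  | cyt {i j k : ℕ} (hij : Idx2 n i j) (hk : Idx n k) (hne : k ≠ j) :
      Rel n (Y n i j * T n k * (T n k * Y n i j)⁻¹)
  | c1 (a b : Sym) {i j k l : ℕ} (hi : Idx n i) (hj : Idx n j) (hk : Idx n k)
      (hl : Idx n l) (hc : cyc4 i j k l) :
      Rel n (gsym n a i j * gsym n b k l * (gsym n b k l * gsym n a i j)⁻¹)
  | c2 (a b c : Sym) {i j k : ℕ} (hi : Idx n i) (hj : Idx n j) (hk : Idx n k)
      (h : C2ok i j k a b c) :
      Rel n (gsym n a i j * (gsym n b i k * gsym n c j k) *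
             (gsym n b i k * gsym n c j k * gsym n a i j)⁻¹)
  | c3 (a b : Sym) {i j k l : ℕ} (hi : Idx n i) (hj : Idx n j) (hk : Idx n k)
      (hl : Idx n l) (hc : cyc4 i j k l) :
      Rel n (gsym n a i k * (P n j k * gsym n b j l * (P n j k)⁻¹) *
             (P n j k * gsym n b j l * (P n j k)⁻¹ * gsym n a i k)⁻¹)
  | mx {i j : ℕ} (hij : Idx2 n i j) :
      Rel n (X n i j * P n i j * T n i * (P n i j * T n i * X n i j)⁻¹)
  | my {i j : ℕ} (hij : Idx2 n i j) :
      Rel n (Y n i j * P n i j * T n j * (P n i j * T n j * Y n i j)⁻¹)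

/-- The presented group `G = ⟨S ∣ R⟩`. -/
abbrev GG (n : ℕ) := FG n ⧸ Subgroup.normalClosure {w : FG n | Rel n w}

/-- The quotient homomorphism `π : F → G`. -/
def piG (n : ℕ) : FG n →* GG n := QuotientGroup.mk' _

/-- The map defining `Φ_{σ_m}` on generators. -/
def phiSigmaMap (n m : ℕ) : Gen n → FG n
  | Gen.pair s i j _ =>
      if i = m ∧ j = m + 1 then
        match s with
        | Sym.p => P n m (m+1)
        | Sym.x => (T n (m+1))⁻¹ * Y n m (m+1) * T n (m+1)
        | Sym.y => X n m (m+1)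
      else if i = m then gsym n s (m+1) j
      else if j = m then gsym n s (m+1) i
      else if i = m + 1 then P n m (m+1) * gsym n s m j * (P n m (m+1))⁻¹
      else if j = m + 1 then P n m (m+1) * gsym n s m i * (P n m (m+1))⁻¹
      else gsym n s i j
  | Gen.t k _ =>
      if k = m then T n (m+1) else if k = m + 1 then T n m else T n k

/-- `Φ_{σ_m} : F → F`. -/
def phiSigma (n m : ℕ) : FG n →* FG n := FreeGroup.lift (phiSigmaMap n m)

/-- The map defining `Ψ_{σ_m}` on generators. -/
def psiSigmaMap (n m : ℕ) : Gen n → FG n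
  | Gen.pair s i j _ =>
      if i = m ∧ j = m + 1 then
        match s with
        | Sym.p => P n m (m+1)
        | Sym.x => Y n m (m+1)
        | Sym.y => T n m * X n m (m+1) * (T n m)⁻¹
      else if i = m then (P n m (m+1))⁻¹ * gsym n s (m+1) j * P n m (m+1)
      else if j = m then (P n m (m+1))⁻¹ * gsym n s (m+1) i * P n m (m+1)
      else if i = m + 1 then gsym n s m j
      else if j = m + 1 then gsym n s m i
      else gsym n s i j
  | Gen.t k _ =>
      if k = m then T n (m+1) else if k = m + 1 then T n m else T n k

/-- `Ψ_{σ_m} : F → F`. -/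
def psiSigma (n m : ℕ) : FG n →* FG n := FreeGroup.lift (psiSigmaMap n m)

/-- The map defining `Φ_{τ_m}` on generators. -/
def phiTauMap (n m : ℕ) : Gen n → FG n
  | Gen.pair s i j _ =>
      match s with
      | Sym.p => P n i j
      | Sym.x => if m = i then (X n i j)⁻¹ * P n i j else X n i j
      | Sym.y => if m = j then (Y n i j)⁻¹ * P n i j else Y n i j
  | Gen.t k _ => T n k

/-- `Φ_{τ_m} : F → F`. -/
def phiTau (n m : ℕ) : FG n →* FG n := FreeGroup.lift (phiTauMap n m)

/-- The map defining `Ψ_{τ_m}` on generators. -/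
def psiTauMap (n m : ℕ) : Gen n → FG n
  | Gen.pair s i j _ =>
      match s with
      | Sym.p => P n i j
      | Sym.x => if m = i then P n i j * (X n i j)⁻¹ else X n i j
      | Sym.y => if m = j then P n i j * (Y n i j)⁻¹ else Y n i j
  | Gen.t k _ => T n k

/-- `Ψ_{τ_m} : F → F`. -/
def psiTau (n m : ℕ) : FG n →* FG n := FreeGroup.lift (psiTauMap n m)

/-! Write `a = p_jk`, `b = p_ij`, `c = t_k`, `d = y_jk`, `e = y_ik`. Relation (M-y) and
(C-pt) say that `d` commutes with `a c = c a`, so `c⁻¹ d c = a d a⁻¹`, and the element in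
question is `a b a⁻¹ (a d a⁻¹) = (a b) (d b) (a b)⁻¹`. Both `a b` and `d b` commute with `e`
by the two (C2) relations `(y,p,p)` and `(y,y,p)` for the triple `(k,i,j)`. -/

section GroupLemmas

variable {G : Type*} [Group G] {a b c d e : G}

theorem inv_mul_mul_eq_conj_of_commute (hac : Commute a c) (hd : Commute d (a * c)) :
    c⁻¹ * d * c = a * d * a⁻¹ := by
  have hd' : d * (c * a) = c * a * d := by rw [← hac.eq]; exact hd.eq
  calc c⁻¹ * d * c = c⁻¹ * (d * (c * a)) * a⁻¹ := by group
    _ = a * d * a⁻¹ := by rw [hd']; group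

theorem commute_mul_mul_inv_mul_conj_inv (hac : Commute a c) (hd : Commute d (a * c))
    (hab : Commute e (a * b)) (hdb : Commute e (d * b)) :
    Commute e (a * b * a⁻¹ * c⁻¹ * d * c) := by
  have hconj : a * b * a⁻¹ * c⁻¹ * d * c = a * b * (d * b) * (a * b)⁻¹ := by
    calc a * b * a⁻¹ * c⁻¹ * d * c = a * b * a⁻¹ * (c⁻¹ * d * c) := by group
      _ = a * b * (d * b) * (a * b)⁻¹ := by
        rw [inv_mul_mul_eq_conj_of_commute hac hd]; group
  rw [hconj]
  exact (hab.mul_right hdb).mul_right hab.inv_right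

end GroupLemmas

theorem gsym_comm (n : ℕ) (s : Sym) (i j : ℕ) : gsym n s i j = gsym n s j i := by
  unfold gsym
  rw [Nat.min_comm, Nat.max_comm]

section Relations

variable {n : ℕ}

theorem piG_eq_of_rel {u v : FG n} (h : Rel n (u * v⁻¹)) : piG n u = piG n v := by
  have h1 : piG n (u * v⁻¹) = 1 :=
    (QuotientGroup.eq_one_iff _).mpr (Subgroup.subset_normalClosure h)
  rw [map_mul, map_inv] at h1
  exact mul_inv_eq_one.mp h1

theorem commute_piG_P_T {i j k : ℕ} (hij : Idx2 n i j) (hk : Idx n k) :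
    Commute (piG n (P n i j)) (piG n (T n k)) := by
  rw [commute_iff_eq]
  simpa only [map_mul] using piG_eq_of_rel (Rel.cpt hij hk)

theorem commute_piG_Y_P_mul_T {i j : ℕ} (hij : Idx2 n i j) :
    Commute (piG n (Y n i j)) (piG n (P n i j) * piG n (T n j)) := by
  rw [commute_iff_eq]
  simpa only [map_mul, mul_assoc] using piG_eq_of_rel (Rel.my hij)

theorem commute_piG_gsym_of_C2ok {a b c : Sym} {i j k : ℕ} (hi : Idx n i) (hj : Idx n j)
    (hk : Idx n k) (h : C2ok i j k a b c) :
    Commute (piG n (gsym n a i j)) (piG n (gsym n b i k) * piG n (gsym n c j k)) := by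
  rw [commute_iff_eq]
  simpa only [map_mul, mul_assoc] using piG_eq_of_rel (Rel.c2 a b c hi hj hk h)

end Relations

theorem stmt18_general (n : ℕ) (i j k : ℕ)
    (h : 1 ≤ i ∧ i < j ∧ j < k ∧ k ≤ n) :
    piG n (Y n i k * (P n j k * P n i j * (P n j k)⁻¹ * (T n k)⁻¹ * Y n j k * T n k)) =
    piG n (P n j k * P n i j * (P n j k)⁻¹ * (T n k)⁻¹ * Y n j k * T n k * Y n i k) := by
  obtain ⟨hi, hij, hjk, hkn⟩ := h
  have hIi : Idx n i := ⟨hi, by omega⟩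
  have hIj : Idx n j := ⟨by omega, by omega⟩
  have hIk : Idx n k := ⟨by omega, hkn⟩
  have hIjk : Idx2 n j k := ⟨hIj.1, hjk, hkn⟩
  have hC2 {b c : Sym} (hbc : (Sym.y, b, c) ∈ c2B) :
      Commute (piG n (Y n i k)) (piG n (gsym n b j k) * piG n (gsym n c i j)) := by
    have := commute_piG_gsym_of_C2ok hIk hIi hIj (Or.inr (Or.inl ⟨hij, hjk, hbc⟩))
    rwa [gsym_comm n _ k i, gsym_comm n _ k j] at this
  have hyp : Commute (piG n (Y n i k)) (piG n (P n j k) * piG n (P n i j)) :=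
    hC2 (b := Sym.p) (c := Sym.p) (by decide)
  have hyy : Commute (piG n (Y n i k)) (piG n (Y n j k) * piG n (P n i j)) :=
    hC2 (b := Sym.y) (c := Sym.p) (by decide)
  simpa only [map_mul, map_inv] using
    commute_mul_mul_inv_mul_conj_inv (commute_piG_P_T hIjk hIk) (commute_piG_Y_P_mul_T hIjk)
      hyp hyy |>.eq

/-- STATEMENT 18: For `1 ≤ i < j < k ≤ n`, in `G` the element `y_ik` commutes
with `p_jk p_ij p_jk⁻¹ t_k⁻¹ y_jk t_k`. -/
theorem stmt18 (n : ℕ) (hn : 2 ≤ n) (i j k : ℕ)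
    (h : 1 ≤ i ∧ i < j ∧ j < k ∧ k ≤ n) :
    piG n (Y n i k * (P n j k * P n i j * (P n j k)⁻¹ * (T n k)⁻¹ * Y n j k * T n k)) =
    piG n (P n j k * P n i j * (P n j k)⁻¹ * (T n k)⁻¹ * Y n j k * T n k * Y n i k) :=
  stmt18_general n i j k h

end PureHilden
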